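/- Let F, F̃ : ℝ^d → ℝ be twice continuously differentiable functions and let λ > 0 be such that F(w) = F̃(λ w) for all w ∈ ℝ^d. Then for every w ∈ ℝ^d: ‖w‖² · λ_max(Hess F (w)) = ‖λ w‖² · λ_max(Hess F̃ (λ w)), where λ_max denotes the largest eigenvalue of a real symmetric matrix and ‖·‖ is the Euclidean norm. -/

import Mathlib

open Pointwise

/-- The largest eigenvalue of a (symmetric) real matrix, as the supremum of its
eigenvalue set. -/
noncomputable def lambdaMax {ι : Type*} [Fintype ι] [DecidableEq ι]
    (A : Matrix ι ι ℝ) : ℝ :=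
  sSup {μ : ℝ | Module.End.HasEigenvalue (Matrix.toLin' A) μ}

/-- The Hessian matrix of `F : ℝ^ι → ℝ` at the point `u`, given by the matrix of
second partial derivatives. -/
noncomputable def hessianMatrix {ι : Type*} [Fintype ι] [DecidableEq ι]
    (F : EuclideanSpace ℝ ι → ℝ) (u : EuclideanSpace ℝ ι) : Matrix ι ι ℝ :=
  Matrix.of fun i j =>
    fderiv ℝ (fun x => fderiv ℝ F x (EuclideanSpace.single j 1)) u
      (EuclideanSpace.single i 1)

/-- Scaling an endomorphism by a nonzero scalar scales its eigenvalues. -/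
lemma hasEigenvalue_smul_iff {V : Type*} [AddCommGroup V] [Module ℝ V]
    {c : ℝ} (hc : c ≠ 0) (T : Module.End ℝ V) (ν : ℝ) :
    (c • T).HasEigenvalue ν ↔ T.HasEigenvalue (c⁻¹ * ν) := by
  have hsp : Module.End.eigenspace (c • T) ν = Module.End.eigenspace T (c⁻¹ * ν) := by
    ext x
    rw [Module.End.mem_eigenspace_iff, Module.End.mem_eigenspace_iff,
      LinearMap.smul_apply]
    constructor
    · intro h
      have : c⁻¹ • (c • T x) = c⁻¹ • (ν • x) := by rw [h]
      rwa [smul_smul, inv_mul_cancel₀ hc, one_smul, smul_smul] at this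
    · intro h
      rw [h, smul_smul]; congr 1; field_simp
  rw [Module.End.hasEigenvalue_iff, Module.End.hasEigenvalue_iff, hsp]

/-- `lambdaMax` is positively homogeneous. -/
lemma lambdaMax_smul {ι : Type*} [Fintype ι] [DecidableEq ι]
    (A : Matrix ι ι ℝ) {c : ℝ} (hc : 0 < c) :
    lambdaMax (c • A) = c * lambdaMax A := by
  have hset : {μ : ℝ | Module.End.HasEigenvalue (Matrix.toLin' (c • A)) μ}
      = c • {μ : ℝ | Module.End.HasEigenvalue (Matrix.toLin' A) μ} := by
    ext ν
    rw [Set.mem_smul_set_iff_inv_smul_mem₀ hc.ne']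
    simp only [Set.mem_setOf_eq, map_smul, smul_eq_mul]
    exact hasEigenvalue_smul_iff hc.ne' _ _
  rw [lambdaMax, hset, Real.sSup_smul_of_nonneg hc.le, smul_eq_mul, lambdaMax]

/-- If `F(w) = F̃(λw)` for all `w` with `λ > 0`, then
`‖w‖² · λ_max(Hess F (w)) = ‖λw‖² · λ_max(Hess F̃ (λw))`. -/
theorem kappa_invariant_single {d : ℕ} (F Ft : EuclideanSpace ℝ (Fin d) → ℝ)
    (hF : ContDiff ℝ 2 F) (hFt : ContDiff ℝ 2 Ft)
    (lam : ℝ) (hlam : 0 < lam)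
    (heq : ∀ w : EuclideanSpace ℝ (Fin d), F w = Ft (lam • w)) :
    ∀ w : EuclideanSpace ℝ (Fin d),
      ‖w‖ ^ 2 * lambdaMax (hessianMatrix F w) =
        ‖lam • w‖ ^ 2 * lambdaMax (hessianMatrix Ft (lam • w)) := by
  intro w
  let X := EuclideanSpace ℝ (Fin d)
  let e : Fin d → X := fun i => EuclideanSpace.single i 1
  have hFt1 : Differentiable ℝ Ft := hFt.differentiable (by norm_num)
  have hA : ContDiff ℝ 1 (fderiv ℝ Ft) := hFt.fderiv_right (by norm_num)
  have hg : ∀ j, Differentiable ℝ (fun x : X => fderiv ℝ Ft x (e j)) := fun j =>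
    (hA.differentiable (by norm_num)).clm_apply (differentiable_const _)
  have hL : ∀ x : X, HasFDerivAt (fun y : X => lam • y)
      (lam • ContinuousLinearMap.id ℝ X) x := fun x =>
    (hasFDerivAt_id x).const_smul lam
  have hFeq : F = fun x => Ft (lam • x) := funext heq
  have hdF : ∀ x : X, fderiv ℝ F x
      = (fderiv ℝ Ft (lam • x)).comp (lam • ContinuousLinearMap.id ℝ X) := by
    intro x
    have h1 : HasFDerivAt Ft (fderiv ℝ Ft (lam • x)) (lam • x) :=
      (hFt1 _).hasFDerivAt
    have h2 := h1.comp x (hL x)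
    rw [hFeq]
    exact h2.fderiv
  have hfun : ∀ j, (fun x : X => fderiv ℝ F x (e j))
      = fun x => lam * fderiv ℝ Ft (lam • x) (e j) := by
    intro j
    funext x
    rw [hdF x]
    simp [ContinuousLinearMap.comp_apply, ContinuousLinearMap.smul_apply,
      map_smul, smul_eq_mul]
  have hHess : hessianMatrix F w = (lam ^ 2) • hessianMatrix Ft (lam • w) := by
    ext i j
    have h1 : HasFDerivAt (fun x : X => fderiv ℝ Ft (lam • x) (e j))
        ((fderiv ℝ (fun x : X => fderiv ℝ Ft x (e j)) (lam • w)).comp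
          (lam • ContinuousLinearMap.id ℝ X)) w :=
      ((hg j (lam • w)).hasFDerivAt).comp w (hL w)
    have h2 := h1.const_mul lam
    have h3 : fderiv ℝ (fun x : X => lam * fderiv ℝ Ft (lam • x) (e j)) w
        = lam • ((fderiv ℝ (fun x : X => fderiv ℝ Ft x (e j)) (lam • w)).comp
          (lam • ContinuousLinearMap.id ℝ X)) := h2.fderiv
    show fderiv ℝ (fun x : X => fderiv ℝ F x (e j)) w (e i)
        = (lam ^ 2) • (hessianMatrix Ft (lam • w) i j)
    rw [hfun j, h3]
    simp only [ContinuousLinearMap.smul_apply, ContinuousLinearMap.comp_apply,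
      ContinuousLinearMap.coe_smul', Pi.smul_apply, ContinuousLinearMap.coe_id',
      id_eq, map_smul, smul_eq_mul]
    show lam * (lam * fderiv ℝ (fun x : X => fderiv ℝ Ft x (e j)) (lam • w) (e i))
        = lam ^ 2 * fderiv ℝ (fun x : X => fderiv ℝ Ft x (e j)) (lam • w) (e i)
    ring
  rw [hHess, lambdaMax_smul _ (by positivity : (0:ℝ) < lam ^ 2), norm_smul,
    Real.norm_eq_abs, abs_of_pos hlam]
  ring
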